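/- On P^3, let v be a normalized rank-2 numerical class with first Chern class c_1(v) = -1 and fix k ∈ Z_{>0}. Among all short exact sequences of pairs 0 → (I_Z(l),1) → (E(k),s) → (I_{Z'}(l'),0) → 0 with v(E) = v and Z, Z' of codimension ≥ 2 defining a positive critical value δ = P_{E(k)}(t) - 2P_{I_Z(l)}(t), the minimal critical value is achieved by the sequence 0 → (O_{P^3}(k-1),1) → (E(k),s) → (I_Z(k),0) → 0, i.e., when l = k-1, Z = ∅, l' = k. -/

import Mathlib

/-!
The cubic terms of `P_{O(a)}` and `P_{O(b)}` cancel, and `P_{O(a)} - P_{O(b)}` has quadratic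
coefficient `(a - b)/2`; the Hilbert polynomials of `Z, Z'` only perturb the linear and constant
terms. Writing `δ = P_{O(l')} - P_{O(l)} + P_Z - P_{Z'}`, positivity of `δ` thus forces `l < l'`,
i.e. `l ≤ k - 1` since `l + l' = 2k - 1`. The gap to the minimal critical value is
`2 (P_{O(k-1)} - P_{O(l)} + P_Z)`, with leading coefficient `k - 1 - l > 0` when `l < k - 1`,
and equal to `2 P_Z`, which is zero or has positive leading coefficient, when `l = k - 1`.
-/

open Polynomial

/-- `p < q` in the lexicographic order on `ℚ[t]`. -/
def polyLt (p q : Polynomial ℚ) : Prop := 0 < (q - p).leadingCoeff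

/-- `p ≤ q` in the lexicographic order on `ℚ[t]`. -/
def polyLe (p q : Polynomial ℚ) : Prop := p = q ∨ polyLt p q

/-- The Hilbert polynomial of `O_{P^3}(m)`: `P(t) = (t+m+1)(t+m+2)(t+m+3)/6`. -/
noncomputable def hilbO (m : ℤ) : Polynomial ℚ :=
  Polynomial.C (6⁻¹ : ℚ) * (X + C ((m : ℚ) + 1)) * (X + C ((m : ℚ) + 2))
    * (X + C ((m : ℚ) + 3))

lemma hilbO_sub_hilbO (a b : ℤ) :
    hilbO a - hilbO b = C (((a : ℚ) - b) / 2) * X ^ 2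
      + (C (((a : ℚ) - b) * (a + b + 4) / 2) * X
        + C (((a + 1) * (a + 2) * (a + 3) - (b + 1) * (b + 2) * (b + 3) : ℚ) / 6)) := by
  refine Polynomial.funext fun t => ?_
  simp only [hilbO, eval_add, eval_sub, eval_mul, eval_C, eval_X, eval_pow]
  ring

lemma leadingCoeff_C_mul_X_sq_add {R : Type*} [Semiring R] {c : R} (hc : c ≠ 0) {p : R[X]}
    (hp : p.degree ≤ 1) : (C c * X ^ 2 + p).leadingCoeff = c := by
  rw [add_comm, leadingCoeff_add_of_degree_lt, leadingCoeff_C_mul_X_pow]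
  exact hp.trans_lt (by rw [degree_C_mul_X_pow 2 hc]; norm_num)

lemma leadingCoeff_hilbO_sub_hilbO_add {a b : ℤ} (hab : a ≠ b) {p : ℚ[X]} (hp : p.degree ≤ 1) :
    (hilbO a - hilbO b + p).leadingCoeff = ((a : ℚ) - b) / 2 := by
  have hab' : ((a : ℚ) - b) / 2 ≠ 0 := by
    simpa [sub_eq_zero] using (Int.cast_injective (α := ℚ)).ne hab
  rw [hilbO_sub_hilbO, add_assoc, leadingCoeff_C_mul_X_sq_add hab']
  exact (degree_add_le _ _).trans (max_le degree_linear_le hp)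

lemma leadingCoeff_hilbO_sub_hilbO_add_pos_iff {a b : ℤ} (hab : a ≠ b) {p : ℚ[X]}
    (hp : p.degree ≤ 1) : 0 < (hilbO a - hilbO b + p).leadingCoeff ↔ b < a := by
  rw [leadingCoeff_hilbO_sub_hilbO_add hab hp, div_pos_iff_of_pos_right two_pos, sub_pos,
    Int.cast_lt]

lemma polyLt_of_sub_eq_smul {p q r : ℚ[X]} {c : ℚ} (hc : 0 < c) (h : q - p = c • r)
    (hr : 0 < r.leadingCoeff) : polyLt p q := by
  rw [polyLt, h, smul_eq_C_mul, leadingCoeff_mul, leadingCoeff_C]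
  exact mul_pos hc hr

theorem minimal_wall_for_c1_neg_one_general
    (k : ℤ) (PEk : Polynomial ℚ) :
    ∀ (l l' : ℤ) (PZ PZ' : Polynomial ℚ),
      l + l' = 2 * k - 1 →
      PZ.degree ≤ 1 → PZ'.degree ≤ 1 →
      (PZ = 0 ∨ 0 < PZ.leadingCoeff) → (PZ' = 0 ∨ 0 < PZ'.leadingCoeff) →
      PEk = (hilbO l - PZ) + (hilbO l' - PZ') →
      0 < (PEk - (2 : ℚ) • (hilbO l - PZ)).leadingCoeff →
      polyLe (PEk - (2 : ℚ) • hilbO (k - 1)) (PEk - (2 : ℚ) • (hilbO l - PZ)) := by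
  intro l l' PZ PZ' hsum hPZ hPZ' hZ _ hPEk hδ
  have hδ_eq : PEk - (2 : ℚ) • (hilbO l - PZ) = hilbO l' - hilbO l + (PZ - PZ') := by
    subst hPEk; module
  -- `l' ≠ l` because `l + l'` is odd
  have hll' : l < l' := (leadingCoeff_hilbO_sub_hilbO_add_pos_iff (by omega)
    ((degree_sub_le _ _).trans (max_le hPZ hPZ'))).1 (hδ_eq ▸ hδ)
  have hgap : PEk - (2 : ℚ) • (hilbO l - PZ) - (PEk - (2 : ℚ) • hilbO (k - 1))
      = (2 : ℚ) • (hilbO (k - 1) - hilbO l + PZ) := by module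
  obtain hl | hl := (show l ≤ k - 1 by omega).eq_or_lt
  · subst hl
    rw [sub_self, zero_add] at hgap
    obtain hPZ_zero | hPZ_pos := hZ
    · left; rw [hPZ_zero, sub_zero]
    · exact Or.inr (polyLt_of_sub_eq_smul two_pos hgap hPZ_pos)
  · exact Or.inr (polyLt_of_sub_eq_smul two_pos hgap
      ((leadingCoeff_hilbO_sub_hilbO_add_pos_iff (by omega) hPZ).2 hl))

/-- on `P^3`, for a normalized rank-2 class `v` with `c_1(v) = -1` and
`k > 0`, consider all walls given by short exact sequences of pairs
`0 → (I_Z(l), 1) → (E(k), s) → (I_{Z'}(l'), 0) → 0` with `Z, Z'` of codimension `≥ 2`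
(so their Hilbert polynomials `PZ, PZ'` have degree `≤ 1` and nonnegative leading
coefficient), with critical value `δ = P_{E(k)} - 2 P_{I_Z(l)}` where
`P_{I_Z(l)} = P_{O(l)} - PZ`. Here `c_1 = -1` forces `l + l' = 2k - 1`, and the exact
sequence forces `P_{E(k)} = P_{I_Z(l)} + P_{I_{Z'}(l')}`. Among all such walls with
`δ > 0` (lexicographically), the minimal critical value is the one of the sequence
`0 → (O(k-1), 1) → (E(k), s) → (I_Z(k), 0) → 0`, i.e. `l = k - 1`, `Z = ∅`, `l' = k`:
every such `δ` is at least `P_{E(k)} - 2 P_{O(k-1)}`. -/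
theorem minimal_wall_for_c1_neg_one
    (k : ℤ) (hk : 0 < k) (PEk : Polynomial ℚ) :
    ∀ (l l' : ℤ) (PZ PZ' : Polynomial ℚ),
      l + l' = 2 * k - 1 →
      PZ.degree ≤ 1 → PZ'.degree ≤ 1 →
      (PZ = 0 ∨ 0 < PZ.leadingCoeff) → (PZ' = 0 ∨ 0 < PZ'.leadingCoeff) →
      PEk = (hilbO l - PZ) + (hilbO l' - PZ') →
      0 < (PEk - (2 : ℚ) • (hilbO l - PZ)).leadingCoeff →
      polyLe (PEk - (2 : ℚ) • hilbO (k - 1)) (PEk - (2 : ℚ) • (hilbO l - PZ)) :=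
  minimal_wall_for_c1_neg_one_general k PEk
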